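/- Corollary of the symmetric power degree bound: with A, W, ρ̂ as above, let f ∈ Sym^d(W) and let M ⊆ Sym^d(W) be the cyclic U(A)-submodule generated by f. Then M is spanned by the elements ρ̂(μ)(f) for μ ∈ U(A) with deg μ ≤ d. -/

import Mathlib

/-!
Split `ρ̂(a₁ ⋯ a_s)` according to how the derivations distribute over the linear factors of a
monomial. The part `injCompDer l` in which the entries of `l` hit pairwise distinct factors obeys
`injCompDer l (w * g) = w * injCompDer l g + ∑ ρ(c) w * injCompDer (l - c) g`, the sum running over
the entries `c` of `l`; hence it vanishes in degree `< |l|`. The recursion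
`ρ̂(a) ∘ injCompDer l = injCompDer (a :: l) + ∑ injCompDer l'`, where `l'` runs over the lists
obtained from `l` by replacing one entry `c` with `a * c` (the terms where `a` hits a factor already
hit by `c`), shows both that each `ρ̂(l) f` is a combination of the `injCompDer m f` and that each
`injCompDer m f` is a combination of the `ρ̂(l) f` with `|l| ≤ |m|`. For `f` of degree `d` the
`injCompDer m f` with `|m| > d` vanish.
-/

noncomputable section

open MvPolynomial

variable (A : Type) [Ring A] [Algebra ℂ A] (ι : Type)
  (ρ : A →ₐ[ℂ] Module.End ℂ (ι →₀ ℂ))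

/-- The embedding `W = ι →₀ ℂ → ℂ[ι]`. -/
def emb : (ι →₀ ℂ) →ₗ[ℂ] MvPolynomial ι ℂ :=
  Finsupp.linearCombination ℂ MvPolynomial.X

/-- The derivation `ρ̂(a)` of `Sym(W) = ℂ[ι]` extending `ρ(a)`. -/
def Der (a : A) : Derivation ℂ (MvPolynomial ι ℂ) (MvPolynomial ι ℂ) :=
  MvPolynomial.mkDerivation ℂ (fun i => emb ι (ρ a (Finsupp.single i 1)))

/-- The operator `ρ̂(a₁ ⋯ a_s)` for a list `l = [a₁,...,a_s]`. -/
def compDer (l : List A) : Module.End ℂ (MvPolynomial ι ℂ) :=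
  (l.map (fun a => ((Der A ι ρ a).toLinearMap : Module.End ℂ (MvPolynomial ι ℂ)))).prod

namespace List

variable {α M : Type*}

def modifyOne (φ : α → α) : List α → List (List α)
  | [] => []
  | b :: l => (φ b :: l) :: (modifyOne φ l).map (b :: ·)

def pickOne : List α → List (α × List α)
  | [] => []
  | b :: l => (b, l) :: (pickOne l).map (fun p => (p.1, b :: p.2))

theorem length_eq_of_mem_modifyOne {φ : α → α} :
    ∀ {l m : List α}, m ∈ modifyOne φ l → m.length = l.length
  | b :: l, m, h => by
    rcases mem_cons.mp h with rfl | h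
    · rfl
    · obtain ⟨m', hm', rfl⟩ := mem_map.mp h
      simp [length_eq_of_mem_modifyOne hm']

theorem length_add_one_of_mem_pickOne :
    ∀ {l : List α} {p : α × List α}, p ∈ pickOne l → p.2.length + 1 = l.length
  | b :: l, p, h => by
    rcases mem_cons.mp h with rfl | h
    · rfl
    · obtain ⟨p', hp', rfl⟩ := mem_map.mp h
      simp [length_add_one_of_mem_pickOne hp']

theorem sum_pickOne_modifyOne [AddCommMonoid M] (φ : α → α) (F : α → List α → M) (l : List α) :
    ((modifyOne φ l).map fun m => ((pickOne m).map fun p => F p.1 p.2).sum).sum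
      = ((pickOne l).map fun p => F (φ p.1) p.2 + ((modifyOne φ p.2).map (F p.1)).sum).sum := by
  induction l generalizing F with
  | nil => rfl
  | cons b t ih =>
    simp only [modifyOne, pickOne, map_cons, sum_cons, map_map, Function.comp_def, sum_map_add,
      ih fun c r => F c (b :: r)]
    abel

end List

open List

theorem Der_emb (a : A) (w : ι →₀ ℂ) : Der A ι ρ a (emb ι w) = emb ι (ρ a w) := by
  induction w using Finsupp.induction_linear with
  | zero => simp
  | add u v hu hv => simp [hu, hv]
  | single i c =>
    rw [← mul_one c, ← smul_eq_mul, ← Finsupp.smul_single, map_smul, Derivation.map_smul,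
      map_smul, map_smul]
    simp [emb, Der, mkDerivation_X]

theorem Der_emb_mul (a : A) (w : ι →₀ ℂ) (g : MvPolynomial ι ℂ) :
    Der A ι ρ a (emb ι w * g) = emb ι w * Der A ι ρ a g + emb ι (ρ a w) * g := by
  rw [Derivation.leibniz, Der_emb, smul_eq_mul, smul_eq_mul, mul_comm g]

/-- On a product `w₁ ⋯ w_d` of linear forms, `injCompDer l` is the sum over all injective
placements of the entries `a` of `l` on factors `w_j`, each such factor replaced by `ρ(a) w_j`. -/
def injCompDer : List A → Module.End ℂ (MvPolynomial ι ℂ)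
  | [] => 1
  | a :: l => (Der A ι ρ a).toLinearMap * injCompDer l
      - ((modifyOne (a * ·) l).attach.map fun m => injCompDer m.1).sum
termination_by l => l.length
decreasing_by
  · simp
  · simp [length_eq_of_mem_modifyOne m.2]

@[simp] theorem injCompDer_nil : injCompDer A ι ρ [] = 1 := by
  rw [injCompDer]

theorem injCompDer_cons (a : A) (l : List A) :
    injCompDer A ι ρ (a :: l) = (Der A ι ρ a).toLinearMap * injCompDer A ι ρ l
      - ((modifyOne (a * ·) l).map (injCompDer A ι ρ)).sum := by
  rw [injCompDer, attach_map_val]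

theorem injCompDer_cons_apply (a : A) (l : List A) (g : MvPolynomial ι ℂ) :
    injCompDer A ι ρ (a :: l) g = Der A ι ρ a (injCompDer A ι ρ l g)
      - ((modifyOne (a * ·) l).map fun m => injCompDer A ι ρ m g).sum := by
  rw [injCompDer_cons, LinearMap.sub_apply, Module.End.mul_apply]
  congr 1
  simpa [map_map, Function.comp_def] using
    map_list_sum (LinearMap.applyₗ g) ((modifyOne (a * ·) l).map (injCompDer A ι ρ))

theorem injCompDer_emb_mul (w : ι →₀ ℂ) (g : MvPolynomial ι ℂ) :
    ∀ m : List A, injCompDer A ι ρ m (emb ι w * g) = emb ι w * injCompDer A ι ρ m g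
      + ((pickOne m).map fun p => emb ι (ρ p.1 w) * injCompDer A ι ρ p.2 g).sum
  | [] => by simp [pickOne]
  | a :: l => by
    have hDer : ((pickOne l).map fun p =>
          Der A ι ρ a (emb ι (ρ p.1 w) * injCompDer A ι ρ p.2 g)).sum
        = ((pickOne l).map fun p => emb ι (ρ (a * p.1) w) * injCompDer A ι ρ p.2 g
            + ((modifyOne (a * ·) p.2).map fun r => emb ι (ρ p.1 w) * injCompDer A ι ρ r g).sum).sum
          + ((pickOne l).map fun p => emb ι (ρ p.1 w) * injCompDer A ι ρ (a :: p.2) g).sum := by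
      rw [← sum_map_add]
      refine congrArg sum (map_congr_left fun p _ => ?_)
      rw [Der_emb_mul, injCompDer_cons_apply, map_mul, Module.End.mul_apply, mul_sub,
        ← sum_map_mul_left]
      abel
    rw [injCompDer_cons_apply, injCompDer_cons_apply, injCompDer_emb_mul w g l, map_add,
      Der_emb_mul, map_list_sum, map_map, Function.comp_def, hDer,
      map_congr_left fun m _ => injCompDer_emb_mul w g m, sum_map_add (l := modifyOne _ l),
      sum_pickOne_modifyOne _ fun c r => emb ι (ρ c w) * injCompDer A ι ρ r g, sum_map_mul_left,
      pickOne, map_cons, sum_cons, map_map, Function.comp_def]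
    ring
termination_by m => m.length
decreasing_by
  all_goals simp_wf
  · exact (length_eq_of_mem_modifyOne ‹_›).le

theorem injCompDer_apply_one : ∀ {m : List A}, m ≠ [] → injCompDer A ι ρ m 1 = 0
  | [a], _ => by simp [injCompDer_cons_apply, modifyOne]
  | a :: b :: l, _ => by
    rw [injCompDer_cons_apply, injCompDer_apply_one (cons_ne_nil b l), map_zero, zero_sub,
      neg_eq_zero]
    refine sum_eq_zero fun x hx => ?_
    obtain ⟨m, hm, rfl⟩ := mem_map.mp hx
    exact injCompDer_apply_one (ne_nil_of_length_pos (by simp [length_eq_of_mem_modifyOne hm]))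
termination_by m => m.length
decreasing_by
  all_goals simp_wf
  · exact (length_eq_of_mem_modifyOne ‹_›).le

theorem injCompDer_apply_monomial (s : ι →₀ ℕ) (c : ℂ) :
    ∀ m : List A, (monomial s c).totalDegree < m.length →
      injCompDer A ι ρ m (monomial s c) = 0 := by
  refine induction_on_monomial
    (motive := fun p => ∀ m : List A, p.totalDegree < m.length → injCompDer A ι ρ m p = 0) ?_ ?_ s c
  · intro c m hm
    rw [C_eq_smul_one, map_smul, injCompDer_apply_one A ι ρ (ne_nil_of_length_pos (by omega)),
      smul_zero]
  · intro p i ih m hm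
    rcases eq_or_ne p 0 with rfl | hp
    · simp
    have hdeg : p.totalDegree + 1 < m.length := by
      rwa [totalDegree_mul_of_isDomain hp (X_ne_zero i), totalDegree_X] at hm
    have hX : (X i : MvPolynomial ι ℂ) = emb ι (Finsupp.single i 1) := by
      simp [emb]
    rw [mul_comm, hX, injCompDer_emb_mul, ih m (by omega), mul_zero, zero_add]
    refine sum_eq_zero fun x hx => ?_
    obtain ⟨q, hq, rfl⟩ := mem_map.mp hx
    rw [ih q.2 (by have := length_add_one_of_mem_pickOne hq; omega), mul_zero]

theorem injCompDer_apply_eq_zero_of_totalDegree_lt {m : List A} {p : MvPolynomial ι ℂ}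
    (h : p.totalDegree < m.length) : injCompDer A ι ρ m p = 0 := by
  rw [p.as_sum, map_sum]
  exact Finset.sum_eq_zero fun s hs => injCompDer_apply_monomial A ι ρ s _ m
    (((totalDegree_monomial_le s _).trans (le_totalDegree hs)).trans_lt h)

theorem compDer_cons_apply (a : A) (l : List A) (f : MvPolynomial ι ℂ) :
    compDer A ι ρ (a :: l) f = Der A ι ρ a (compDer A ι ρ l f) :=
  rfl

theorem compDer_mem_span_injCompDer (f : MvPolynomial ι ℂ) (l : List A) :
    compDer A ι ρ l f ∈ Submodule.span ℂ (Set.range fun m => injCompDer A ι ρ m f) := by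
  induction l with
  | nil => exact Submodule.subset_span ⟨[], by simp [compDer]⟩
  | cons a l ih =>
    rw [compDer_cons_apply]
    refine (Submodule.map_span_le (Der A ι ρ a).toLinearMap _ _).2 ?_ (Submodule.mem_map_of_mem ih)
    rintro _ ⟨m, rfl⟩
    have h := injCompDer_cons_apply A ι ρ a m f
    rw [eq_sub_iff_add_eq] at h
    rw [Derivation.coeFn_coe, ← h]
    refine add_mem (Submodule.subset_span ⟨_, rfl⟩) (list_sum_mem fun x hx => ?_)
    obtain ⟨m', -, rfl⟩ := mem_map.mp hx
    exact Submodule.subset_span ⟨m', rfl⟩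

theorem injCompDer_mem_span_compDer (f : MvPolynomial ι ℂ) : ∀ m : List A,
    injCompDer A ι ρ m f ∈
      Submodule.span ℂ {g | ∃ l : List A, l.length ≤ m.length ∧ g = compDer A ι ρ l f}
  | [] => Submodule.subset_span ⟨[], le_rfl, by simp [compDer]⟩
  | a :: l => by
    rw [injCompDer_cons_apply]
    refine sub_mem ?_ (list_sum_mem fun x hx => ?_)
    · refine (Submodule.map_span_le (Der A ι ρ a).toLinearMap _ _).2 ?_
        (Submodule.mem_map_of_mem (injCompDer_mem_span_compDer f l))
      rintro _ ⟨l', hl', rfl⟩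
      exact Submodule.subset_span
        ⟨a :: l', by simpa using hl', (compDer_cons_apply A ι ρ a l' f).symm⟩
    · obtain ⟨m, hm, rfl⟩ := mem_map.mp hx
      refine Submodule.span_mono ?_ (injCompDer_mem_span_compDer f m)
      rintro _ ⟨l', hl', rfl⟩
      exact ⟨l', by simp [length_eq_of_mem_modifyOne hm] at hl' ⊢; omega, rfl⟩
termination_by m => m.length
decreasing_by
  all_goals simp_wf
  · exact (length_eq_of_mem_modifyOne ‹_›).le

theorem cyclic_module_spanned_in_degree_at_most_d (d : ℕ)
    (f : MvPolynomial ι ℂ) (hf : f ∈ MvPolynomial.homogeneousSubmodule ι ℂ d) :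
    Submodule.span ℂ {g : MvPolynomial ι ℂ | ∃ l : List A, g = compDer A ι ρ l f} =
      Submodule.span ℂ
        {g : MvPolynomial ι ℂ | ∃ l : List A, l.length ≤ d ∧ g = compDer A ι ρ l f} := by
  have hdeg : f.totalDegree ≤ d := hf.totalDegree_le
  refine le_antisymm (Submodule.span_le.2 ?_) (Submodule.span_mono ?_)
  · rintro _ ⟨l, rfl⟩
    refine Submodule.span_le.2 ?_ (compDer_mem_span_injCompDer A ι ρ f l)
    rintro _ ⟨m, rfl⟩
    rcases le_or_gt m.length d with h | h
    · refine Submodule.span_mono ?_ (injCompDer_mem_span_compDer A ι ρ f m)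
      rintro _ ⟨l', hl', rfl⟩
      exact ⟨l', hl'.trans h, rfl⟩
    · simp only [injCompDer_apply_eq_zero_of_totalDegree_lt A ι ρ (hdeg.trans_lt h)]
      exact zero_mem _
  · rintro _ ⟨l, -, rfl⟩
    exact ⟨l, rfl⟩

end
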